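/- arXiv:1501.03032 — 2 statements merged into one kernel-verified Lean document; each statement's English description precedes it below -/
import Mathlib

section
/- Let n ≥ 3 and m ≥ 3 be integers, let p_0,…,p_n ∈ ℝ^d and r_0,…,r_m ∈ ℝ^d, set P_n(t) := Σ_{i=0}^{n} p_i B_i^n(t) and R_m(t) := Σ_{i=0}^{m} r_i B_i^m(t), and let μ_1, μ_2, μ_3 be real numbers. Suppose the G³ conditions at t = 1 hold: R_m(1) = P_n(1), R_m'(1) = μ_1 P_n'(1), R_m''(1) = μ_1² P_n''(1) + μ_2 P_n'(1), and R_m'''(1) = μ_1³ P_n'''(1) + 3μ_1μ_2 P_n''(1) + μ_3 P_n'(1). Then: r_m = p_n; r_{m-1} = p_n - (n/m)μ_1 Δp_{n-1}; r_{m-2} = p_n - (n/m)[2μ_1 - μ_2/(m-1)] Δp_{n-1} + ((n-1)_2/(m-1)_2) μ_1² Δ²p_{n-2}; and r_{m-3} = p_n - (n/m)[3μ_1 - 3μ_2/(m-1) + μ_3/((m-2)_2)] Δp_{n-1} + 3((n-1)_2/(m-1)_2)[μ_1² - μ_1μ_2/(m-2)] Δ²p_{n-2} - ((n-2)_3/(m-2)_3)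 μ_1³ Δ³p_{n-3}, where (a)_k denotes the Pochhammer symbol and Δ is the forward difference operator. -/
/-!
Differentiating a Bézier curve lowers its degree and replaces the control points by their
forward differences (the hodograph), so at `t = 1`, where only the last Bernstein polynomial
survives, `P⁽ᵏ⁾(1) = n(n-1)⋯(n-k+1) Δᵏp_{n-k}`. The G³ conditions therefore form a triangular
system for `r_m, Δr_{m-1}, Δ²r_{m-2}, Δ³r_{m-3}`, and Newton's backward formula turns its
solution into the control points `r_{m-k}`.
-/

open MeasureTheory Polynomial

/-- Bernstein polynomial `B_i^n(t) = C(n,i) t^i (1-t)^{n-i}` as a real function. -/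
noncomputable def bern (n i : ℕ) (t : ℝ) : ℝ := (n.choose i : ℝ) * t ^ i * (1 - t) ^ (n - i)

/-- Pochhammer symbol `(a)_k = a(a+1)⋯(a+k-1)`. -/
noncomputable def poch (a : ℝ) (k : ℕ) : ℝ := (ascPochhammer ℝ k).eval a

/-- Forward difference operator: `fdiff q k i = Δ^k q_i`. -/
def fdiff {E : Type*} [AddCommGroup E] (q : ℕ → E) : ℕ → ℕ → E
  | 0, i => q i
  | k + 1, i => fdiff q k (i + 1) - fdiff q k i

lemma fdiff_newton_backward {V : Type*} [AddCommGroup V] (q : ℕ → V) {m : ℕ} (hm : 3 ≤ m) :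
    q (m - 1) = q m - fdiff q 1 (m - 1) ∧
    q (m - 2) = q m - 2 • fdiff q 1 (m - 1) + fdiff q 2 (m - 2) ∧
    q (m - 3) = q m - 3 • fdiff q 1 (m - 1) + 3 • fdiff q 2 (m - 2) - fdiff q 3 (m - 3) := by
  obtain ⟨j, rfl⟩ : ∃ j, m = j + 3 := ⟨m - 3, by omega⟩
  simp only [fdiff, show j + 3 - 1 = j + 2 by omega, show j + 3 - 2 = j + 1 by omega,
    Nat.add_sub_cancel]
  exact ⟨by abel, by abel, by abel⟩

lemma bern_eq_eval (n i : ℕ) (t : ℝ) : bern n i t = (bernsteinPolynomial ℝ n i).eval t := by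
  simp [bern, bernsteinPolynomial]

section Module

variable {E : Type*} [AddCommGroup E] [Module ℝ E]

noncomputable def bezier (n : ℕ) (p : ℕ → E) (t : ℝ) : E :=
  ∑ i ∈ Finset.range (n + 1), bern n i t • p i

lemma bezier_one (n : ℕ) (p : ℕ → E) : bezier n p 1 = p n := by
  rw [bezier, Finset.sum_eq_single_of_mem n (Finset.self_mem_range_succ n)]
  · simp [bern_eq_eval, bernsteinPolynomial.eval_at_1]
  · intro i _ hi
    simp [bern_eq_eval, bernsteinPolynomial.eval_at_1, hi]

end Module

section Normed

variable {E : Type*} [NormedAddCommGroup E] [NormedSpace ℝ E]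

lemma hasDerivAt_bezier (n : ℕ) (p : ℕ → E) (t : ℝ) :
    HasDerivAt (bezier (n + 1) p) (((n + 1 : ℕ) : ℝ) • bezier n (fdiff p 1) t) t := by
  have hderiv : HasDerivAt (bezier (n + 1) p) (∑ i ∈ Finset.range (n + 2),
      (derivative (bernsteinPolynomial ℝ (n + 1) i)).eval t • p i) t := by
    unfold bezier
    simp only [bern_eq_eval]
    exact HasDerivAt.fun_sum fun i _ =>
      ((bernsteinPolynomial ℝ (n + 1) i).hasDerivAt t).smul_const (p i)
  convert hderiv using 1
  rw [Finset.sum_range_succ', bernsteinPolynomial.derivative_zero]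
  simp only [bernsteinPolynomial.derivative_succ_aux, eval_mul, eval_neg, eval_sub, eval_add,
    eval_one, eval_natCast, bezier, bern_eq_eval, fdiff, Nat.add_sub_cancel, smul_sub, sub_smul,
    mul_smul, Finset.sum_sub_distrib, ← Finset.smul_sum]
  -- summation by parts; the boundary term drops out because `B^n_{n+1} = 0`
  have hshift :
      ∑ i ∈ Finset.range (n + 1), (bernsteinPolynomial ℝ n (i + 1)).eval t • p (i + 1) +
        (bernsteinPolynomial ℝ n 0).eval t • p 0 =
      ∑ i ∈ Finset.range (n + 1), (bernsteinPolynomial ℝ n i).eval t • p i := by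
    rw [← Finset.sum_range_succ' (fun i => (bernsteinPolynomial ℝ n i).eval t • p i),
      Finset.sum_range_succ, bernsteinPolynomial.eq_zero_of_lt ℝ (Nat.lt_succ_self n), eval_zero,
      zero_smul, add_zero]
  push_cast
  linear_combination (norm := module) ((n:ℝ) + 1) • hshift

lemma iteratedDeriv_bezier (p : ℕ → E) {n k : ℕ} (hk : k ≤ n) :
    iteratedDeriv k (bezier n p) = (n.descFactorial k : ℝ) • bezier (n - k) (fdiff p k) := by
  induction k with
  | zero => rw [iteratedDeriv_zero, Nat.descFactorial_zero, Nat.cast_one, one_smul]; rfl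
  | succ k ih =>
    obtain ⟨j, hj⟩ : ∃ j, n - k = j + 1 := ⟨n - k - 1, by omega⟩
    funext t
    rw [iteratedDeriv_succ, ih (by omega), hj,
      ((hasDerivAt_bezier j (fdiff p k) t).const_smul (n.descFactorial k : ℝ)).deriv, smul_smul,
      Nat.descFactorial_succ, hj, show n - (k + 1) = j by omega, Nat.cast_mul, mul_comm]
    rfl

lemma iteratedDeriv_bezier_one (p : ℕ → E) {n k : ℕ} (hk : k ≤ n) :
    iteratedDeriv k (bezier n p) 1 = (n.descFactorial k : ℝ) • fdiff p k (n - k) := by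
  rw [iteratedDeriv_bezier p hk, Pi.smul_apply, bezier_one]

end Normed

theorem stmt14 (d n m : ℕ) (hn : 3 ≤ n) (hm : 3 ≤ m)
    (p r : ℕ → EuclideanSpace ℝ (Fin d)) (mu1 mu2 mu3 : ℝ)
    (P R : ℝ → EuclideanSpace ℝ (Fin d))
    (hP : P = fun t : ℝ => ∑ i ∈ Finset.range (n + 1), bern n i t • p i)
    (hR : R = fun t : ℝ => ∑ i ∈ Finset.range (m + 1), bern m i t • r i)
    -- the G³ conditions at t = 1
    (h0 : R 1 = P 1)
    (h1 : deriv R 1 = mu1 • deriv P 1)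
    (h2 : iteratedDeriv 2 R 1 = mu1 ^ 2 • iteratedDeriv 2 P 1 + mu2 • deriv P 1)
    (h3 : iteratedDeriv 3 R 1 = mu1 ^ 3 • iteratedDeriv 3 P 1 +
      (3 * mu1 * mu2) • iteratedDeriv 2 P 1 + mu3 • deriv P 1) :
    r m = p n ∧
    r (m - 1) = p n - ((n : ℝ) / (m : ℝ) * mu1) • fdiff p 1 (n - 1) ∧
    r (m - 2) = p n -
        ((n : ℝ) / (m : ℝ) * (2 * mu1 - mu2 / ((m : ℝ) - 1))) • fdiff p 1 (n - 1) +
        (poch ((n : ℝ) - 1) 2 / poch ((m : ℝ) - 1) 2 * mu1 ^ 2) • fdiff p 2 (n - 2) ∧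
    r (m - 3) = p n -
        ((n : ℝ) / (m : ℝ) *
          (3 * mu1 - 3 * mu2 / ((m : ℝ) - 1) + mu3 / poch ((m : ℝ) - 2) 2)) • fdiff p 1 (n - 1) +
        (3 * (poch ((n : ℝ) - 1) 2 / poch ((m : ℝ) - 1) 2) *
          (mu1 ^ 2 - mu1 * mu2 / ((m : ℝ) - 2))) • fdiff p 2 (n - 2) -
        (poch ((n : ℝ) - 2) 3 / poch ((m : ℝ) - 2) 3 * mu1 ^ 3) • fdiff p 3 (n - 3) := by
  obtain rfl : P = bezier n p := hP
  obtain rfl : R = bezier m r := hR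
  rw [bezier_one, bezier_one] at h0
  simp (disch := omega) only [← iteratedDeriv_one, iteratedDeriv_bezier_one] at h1 h2 h3
  have hdesc : ∀ k ≤ 3, (m.descFactorial k : ℝ) ≠ 0 := fun k hk =>
    Nat.cast_ne_zero.2 (Nat.descFactorial_eq_zero_iff_lt.not.2 (by omega))
  rw [← eq_inv_smul_iff₀ (hdesc 1 (by norm_num))] at h1
  rw [← eq_inv_smul_iff₀ (hdesc 2 (by norm_num))] at h2
  rw [← eq_inv_smul_iff₀ (hdesc 3 le_rfl)] at h3
  obtain ⟨e1, e2, e3⟩ := fdiff_newton_backward r hm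
  refine ⟨h0, ?_⟩
  rw [e1, e2, e3, h1, h2, h3, h0]
  have hm' : (3 : ℝ) ≤ m := by exact_mod_cast hm
  have hm0 : (m : ℝ) ≠ 0 := by linarith
  have hm1 : (m : ℝ) - 1 ≠ 0 := by linarith
  have hm2 : (m : ℝ) - 2 ≠ 0 := by linarith
  simp (disch := omega) only [Nat.cast_descFactorial, Nat.reduceSub, Nat.cast_sub, poch,
    ascPochhammer_succ_eval, ascPochhammer_zero, eval_one, Nat.cast_zero, Nat.cast_one,
    Nat.cast_ofNat, sub_zero, add_zero, one_mul, sub_add_cancel,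
    show ∀ x : ℝ, x - 2 + 1 = x - 1 from fun x => by ring]
  refine ⟨?_, ?_, ?_⟩ <;> match_scalars <;> field_simp <;> ring
end

section
/- Let α, β > -1 be real numbers, let n > m > 6 be integers with n ≥ 3, and let p_0,…,p_n ∈ ℝ^d with P_n(t) := Σ_{i=0}^{n} p_i B_i^n(t). For real parameters λ_1, λ_2, λ_3, μ_1, μ_2, μ_3, define the boundary control points r_0,…,r_3 by the G³ left-endpoint formulas r_0 := p_0, r_1 := p_0 + (n/m)λ_1 Δp_0, r_2 := p_0 + (n/m)[2λ_1 + λ_2/(m-1)]Δp_0 + ((n-1)_2/(m-1)_2)λ_1² Δ²p_0, r_3 := p_0 + (n/m)[3λ_1 + 3λ_2/(m-1) + λ_3/((m-2)_2)]Δp_0 + 3((n-1)_2/(m-1)_2)[λ_1² + λ_1λ_2/(m-2)]Δ²p_0 + ((n-2)_3/(m-2)_3)λ_1³ Δ³p_0, and r_{m-3},…,r_m by the analogous G³ right-endpoint formulas in μ_1, μ_2, μ_3, and define the inner control points r_4,…,r_{m-4} to be the unique minimizers of E(λ_1,λ_2,λ_3,μ_1,μ_2,μ_3) := ∫₀¹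 (1-t)^α t^β ‖P_n(t) - Σ_{i=0}^{m} r_i B_i^m(t)‖² dt for these fixed boundary points (via the constrained dual Bernstein basis of Π_m^{(3,3)}). Then the function (λ_1,λ_2,λ_3,μ_1,μ_2,μ_3) ↦ E is a polynomial function of total degree at most 6. -/
open MeasureTheory Polynomial

/-- Binomial coefficient `C(u,v)` for an integer `v`, with the convention that it
vanishes when `v < 0` or `v > u`. -/
noncomputable def chZ (u : ℕ) (v : ℤ) : ℝ := if 0 ≤ v then (u.choose v.toNat : ℝ) else 0

/-- The inner product `⟨f,g⟩_{α,β} = ∫₀¹ (1-t)^α t^β f(t) g(t) dt`. -/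
noncomputable def jacobiInner (α β : ℝ) (f g : Polynomial ℝ) : ℝ :=
  ∫ t in (0:ℝ)..1, (1 - t) ^ α * t ^ β * (f.eval t * g.eval t)

/-- The linear functional `p ↦ (d^i/dt^i p)(x)` on real polynomials. -/
noncomputable def evalDeriv (x : ℝ) (i : ℕ) : Polynomial ℝ →ₗ[ℝ] ℝ :=
  (Polynomial.leval x).comp
    (((Polynomial.derivative : Module.End ℝ (Polynomial ℝ)) ^ i : Module.End ℝ (Polynomial ℝ)))

/-- The space `Π_m^{(k,l)}`. -/
noncomputable def PiSpace (m : ℕ) (k l : ℤ) : Submodule ℝ (Polynomial ℝ) :=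
  Polynomial.degreeLE ℝ (m : ℕ) ⊓
    (⨅ i ∈ {i : ℕ | (i : ℤ) ≤ k}, LinearMap.ker (evalDeriv 0 i)) ⊓
    (⨅ j ∈ {j : ℕ | (j : ℤ) ≤ l}, LinearMap.ker (evalDeriv 1 j))

/-!
Each boundary control point is, by its G³ formula, a polynomial of degree at most 3 in the six
shape parameters with vector coefficients, and each inner control point is a fixed affine
combination of the boundary ones, so it is such a polynomial as well. Hence the residual
`P_n - ∑ r_i B_i^m`, viewed in `C(ℝ, ℝ^d)`, is a polynomial map of degree at most 3 in the
parameters, and the error is the value of the bilinear form `⟨f, g⟩ = ∫₀¹ w ⟪f, g⟫` on the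
residual and itself, a polynomial of degree at most 6.
-/

section PolynomialMaps

variable (σ E : Type*) [AddCommGroup E] [Module ℝ E]

def polynomialMaps (N : ℕ) : Submodule ℝ ((σ → ℝ) → E) :=
  Submodule.span ℝ {f | ∃ q : MvPolynomial σ ℝ, ∃ v : E,
    q.totalDegree ≤ N ∧ f = fun x => MvPolynomial.eval x q • v}

variable {σ E}
variable {F G : Type*} [AddCommGroup F] [Module ℝ F] [AddCommGroup G] [Module ℝ G]

theorem eval_smul_mem_polynomialMaps {N : ℕ} (q : MvPolynomial σ ℝ) (hq : q.totalDegree ≤ N)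
    (v : E) : (fun x => MvPolynomial.eval x q • v) ∈ polynomialMaps σ E N :=
  Submodule.subset_span ⟨q, v, hq, rfl⟩

theorem polynomialMaps_mono {N M : ℕ} (h : N ≤ M) : polynomialMaps σ E N ≤ polynomialMaps σ E M :=
  Submodule.span_mono fun _ ⟨q, v, hq, hf⟩ => ⟨q, v, hq.trans h, hf⟩

theorem const_mem_polynomialMaps (N : ℕ) (v : E) : (fun _ => v) ∈ polynomialMaps σ E N := by
  simpa using eval_smul_mem_polynomialMaps (N := N) 1 (by simp) v

theorem coord_pow_mem_polynomialMaps {N : ℕ} (i : σ) (k : ℕ) (hk : k ≤ N) :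
    (fun x : σ → ℝ => x i ^ k) ∈ polynomialMaps σ ℝ N := by
  simpa using eval_smul_mem_polynomialMaps (MvPolynomial.X i ^ k)
    ((MvPolynomial.totalDegree_X_pow i k).le.trans hk) (1 : ℝ)

theorem coord_mem_polynomialMaps {N : ℕ} (i : σ) (hN : 1 ≤ N) :
    (fun x : σ → ℝ => x i) ∈ polynomialMaps σ ℝ N := by
  simpa using coord_pow_mem_polynomialMaps i 1 hN

theorem linearMap_comp_mem_polynomialMaps (L : E →ₗ[ℝ] F) {N : ℕ} {f : (σ → ℝ) → E}
    (hf : f ∈ polynomialMaps σ E N) : (fun x => L (f x)) ∈ polynomialMaps σ F N := by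
  refine (Submodule.span_le (p := (polynomialMaps σ F N).comap (L.compLeft _))).2 ?_ hf
  rintro _ ⟨q, v, hq, rfl⟩
  show (fun x => L (MvPolynomial.eval x q • v)) ∈ polynomialMaps σ F N
  simpa only [map_smul] using eval_smul_mem_polynomialMaps q hq (L v)

def LinearMap.pointwise₂ (B : E →ₗ[ℝ] F →ₗ[ℝ] G) :
    ((σ → ℝ) → E) →ₗ[ℝ] ((σ → ℝ) → F) →ₗ[ℝ] ((σ → ℝ) → G) :=
  LinearMap.mk₂ ℝ (fun f g x => B (f x) (g x))
    (fun _ _ _ => funext fun _ => by simp) (fun _ _ _ => funext fun _ => by simp)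
    (fun _ _ _ => funext fun _ => by simp) (fun _ _ _ => funext fun _ => by simp)

theorem bilinear_mem_polynomialMaps (B : E →ₗ[ℝ] F →ₗ[ℝ] G) {N M : ℕ} {f : (σ → ℝ) → E}
    {g : (σ → ℝ) → F} (hf : f ∈ polynomialMaps σ E N) (hg : g ∈ polynomialMaps σ F M) :
    (fun x => B (f x) (g x)) ∈ polynomialMaps σ G (N + M) := by
  have h := Submodule.apply_mem_map₂ (LinearMap.pointwise₂ B) hf hg
  rw [polynomialMaps, polynomialMaps, Submodule.map₂_span_span] at h
  refine Submodule.span_le.2 ?_ h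
  rintro _ ⟨_, ⟨q, v, hq, rfl⟩, _, ⟨q', w, hq', rfl⟩, rfl⟩
  have hdeg : (q * q').totalDegree ≤ N + M :=
    (MvPolynomial.totalDegree_mul q q').trans (add_le_add hq hq')
  simpa [LinearMap.pointwise₂, smul_smul, mul_comm] using
    eval_smul_mem_polynomialMaps _ hdeg (B v w)

theorem smul_const_mem_polynomialMaps {N : ℕ} {a : (σ → ℝ) → ℝ}
    (ha : a ∈ polynomialMaps σ ℝ N) (v : E) : (fun x => a x • v) ∈ polynomialMaps σ E N := by
  simpa using bilinear_mem_polynomialMaps (LinearMap.lsmul ℝ E) ha (const_mem_polynomialMaps 0 v)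

theorem coord_mul_coord_mem_polynomialMaps {N : ℕ} (i j : σ) (hN : 2 ≤ N) :
    (fun x : σ → ℝ => x i * x j) ∈ polynomialMaps σ ℝ N :=
  have h := bilinear_mem_polynomialMaps (LinearMap.mul ℝ ℝ)
    (coord_mem_polynomialMaps i le_rfl) (coord_mem_polynomialMaps j le_rfl)
  polynomialMaps_mono hN h

theorem exists_eval_eq_of_mem_polynomialMaps {N : ℕ} {f : (σ → ℝ) → ℝ}
    (hf : f ∈ polynomialMaps σ ℝ N) :
    ∃ F : MvPolynomial σ ℝ, F.totalDegree ≤ N ∧ ∀ x, f x = MvPolynomial.eval x F := by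
  induction hf using Submodule.span_induction with
  | mem _ h =>
    obtain ⟨q, v, hq, rfl⟩ := h
    exact ⟨v • q, (MvPolynomial.totalDegree_smul_le v q).trans hq, fun x => by simp [mul_comm]⟩
  | zero => exact ⟨0, by simp, fun x => by simp⟩
  | add _ _ _ _ hf hg =>
    obtain ⟨F, hF, hfF⟩ := hf
    obtain ⟨G, hG, hgG⟩ := hg
    exact ⟨F + G, (MvPolynomial.totalDegree_add F G).trans (max_le hF hG),
      fun x => by simp [hfF, hgG]⟩
  | smul a _ _ hf =>
    obtain ⟨F, hF, hfF⟩ := hf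
    exact ⟨a • F, (MvPolynomial.totalDegree_smul_le a F).trans hF, fun x => by simp [hfF]⟩

end PolynomialMaps

section PointwiseClosure

-- The closure properties of a submodule of functions, in the pointwise shape `apply_rules` matches.

variable {σ E : Type*} [AddCommGroup E] [Module ℝ E] {S : Submodule ℝ ((σ → ℝ) → E)}
  {f g : (σ → ℝ) → E}

theorem fun_add_mem (hf : f ∈ S) (hg : g ∈ S) : (fun x => f x + g x) ∈ S := add_mem hf hg

theorem fun_sub_mem (hf : f ∈ S) (hg : g ∈ S) : (fun x => f x - g x) ∈ S := sub_mem hf hg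

theorem fun_const_smul_mem (c : ℝ) (hf : f ∈ S) : (fun x => c • f x) ∈ S := S.smul_mem c hf

theorem fun_sum_mem {ι : Type*} (s : Finset ι) {f : ι → (σ → ℝ) → E} (hf : ∀ i ∈ s, f i ∈ S) :
    (fun x => ∑ i ∈ s, f i x) ∈ S := by
  simpa [Finset.sum_fn] using sum_mem hf

theorem fun_const_mul_mem {S : Submodule ℝ ((σ → ℝ) → ℝ)} {a : (σ → ℝ) → ℝ} (c : ℝ)
    (ha : a ∈ S) : (fun x => c * a x) ∈ S := S.smul_mem c ha

theorem fun_div_const_mem {S : Submodule ℝ ((σ → ℝ) → ℝ)} {a : (σ → ℝ) → ℝ} (c : ℝ)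
    (ha : a ∈ S) : (fun x => a x / c) ∈ S := by
  simpa only [div_eq_inv_mul] using fun_const_mul_mem c⁻¹ ha

end PointwiseClosure

def ContinuousMap.smulRightₗ {X E : Type*} [TopologicalSpace X] [NormedAddCommGroup E]
    [NormedSpace ℝ E] (b : C(X, ℝ)) : E →ₗ[ℝ] C(X, E) where
  toFun v := ⟨fun t => b t • v, by fun_prop⟩
  map_add' v w := by ext; simp [smul_add]
  map_smul' c v := by ext t; exact smul_comm (b t) c v

noncomputable section WeightedError

variable {E : Type*} [NormedAddCommGroup E] [InnerProductSpace ℝ E]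

theorem intervalIntegrable_one_sub_rpow_mul_rpow_left {a b : ℝ} (hb : -1 < b) :
    IntervalIntegrable (fun t : ℝ => (1 - t) ^ a * t ^ b) volume 0 (1 / 2) := by
  refine (intervalIntegral.intervalIntegrable_rpow' hb).continuousOn_mul ?_
  refine (continuous_const.sub continuous_id).continuousOn.rpow_const fun t ht => Or.inl ?_
  rw [Set.uIcc_of_le (by norm_num)] at ht
  exact (by linarith [ht.2] : (0 : ℝ) < 1 - t).ne'

theorem intervalIntegrable_one_sub_rpow_mul_rpow {a b : ℝ} (ha : -1 < a) (hb : -1 < b) :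
    IntervalIntegrable (fun t : ℝ => (1 - t) ^ a * t ^ b) volume 0 1 := by
  -- on `[1/2, 1]` this is the left-half statement for `(b, a)`, reflected by `t ↦ 1 - t`
  have hright : IntervalIntegrable (fun t : ℝ => (1 - t) ^ a * t ^ b) volume (1 / 2) 1 := by
    have h := ((intervalIntegrable_one_sub_rpow_mul_rpow_left (a := b) ha).comp_sub_left 1).symm
    norm_num at h
    simpa only [mul_comm] using h
  exact (intervalIntegrable_one_sub_rpow_mul_rpow_left hb).trans hright

def weightedInner (w : ℝ → ℝ) (hw : IntervalIntegrable w volume 0 1) :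
    C(ℝ, E) →ₗ[ℝ] C(ℝ, E) →ₗ[ℝ] ℝ :=
  have hint (f g : C(ℝ, E)) : IntervalIntegrable (fun t => w t * inner ℝ (f t) (g t)) volume 0 1 :=
    hw.mul_continuousOn (f.continuous.inner g.continuous).continuousOn
  LinearMap.mk₂ ℝ (fun f g => ∫ t in (0 : ℝ)..1, w t * inner ℝ (f t) (g t))
    (fun f₁ f₂ g => by
      simp only [ContinuousMap.add_apply, inner_add_left, mul_add]
      exact intervalIntegral.integral_add (hint f₁ g) (hint f₂ g))
    (fun c f g => by
      simp only [ContinuousMap.smul_apply, real_inner_smul_left, mul_left_comm _ c,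
        intervalIntegral.integral_const_mul, smul_eq_mul])
    (fun f g₁ g₂ => by
      simp only [ContinuousMap.add_apply, inner_add_right, mul_add]
      exact intervalIntegral.integral_add (hint f g₁) (hint f g₂))
    (fun c f g => by
      simp only [ContinuousMap.smul_apply, real_inner_smul_right, mul_left_comm _ c,
        intervalIntegral.integral_const_mul, smul_eq_mul])

theorem exists_eval_eq_weighted_sq_error {σ ι : Type*} {w : ℝ → ℝ}
    (hw : IntervalIntegrable w volume 0 1) {P : ℝ → E} (hP : Continuous P) (s : Finset ι)
    {b : ι → ℝ → ℝ} (hb : ∀ i, Continuous (b i)) {r : ι → (σ → ℝ) → E} {N : ℕ}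
    (hr : ∀ i ∈ s, r i ∈ polynomialMaps σ E N) :
    ∃ F : MvPolynomial σ ℝ, F.totalDegree ≤ N + N ∧ ∀ x,
      ∫ t in (0 : ℝ)..1, w t * ‖P t - ∑ i ∈ s, b i t • r i x‖ ^ 2 = MvPolynomial.eval x F := by
  set residual : (σ → ℝ) → C(ℝ, E) := fun x =>
    ⟨P, hP⟩ - ∑ i ∈ s, ContinuousMap.smulRightₗ ⟨b i, hb i⟩ (r i x)
  have hresidual : residual ∈ polynomialMaps σ C(ℝ, E) N :=
    fun_sub_mem (const_mem_polynomialMaps N _)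
      (fun_sum_mem s fun i hi => linearMap_comp_mem_polynomialMaps _ (hr i hi))
  obtain ⟨F, hF, hFx⟩ := exists_eval_eq_of_mem_polynomialMaps
    (bilinear_mem_polynomialMaps (weightedInner w hw) hresidual hresidual)
  refine ⟨F, hF, fun x => ?_⟩
  rw [← hFx]
  refine intervalIntegral.integral_congr fun t _ => ?_
  simp [residual, ContinuousMap.smulRightₗ]

end WeightedError

@[fun_prop]
theorem continuous_bern (n i : ℕ) : Continuous (bern n i) := by
  unfold bern
  fun_prop

theorem stmt17_general (α β : ℝ) (hα : -1 < α) (hβ : -1 < β) (d n m : ℕ)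
    (p : ℕ → EuclideanSpace ℝ (Fin d))
    -- the constrained dual Bernstein basis of `Π_m^{(3,3)}`
    (D : ℕ → Polynomial ℝ)
    -- the control points, as functions of the parameters λ₁, λ₂, λ₃, μ₁, μ₂, μ₃:
    (rf : ℝ → ℝ → ℝ → ℝ → ℝ → ℝ → ℕ → EuclideanSpace ℝ (Fin d))
    -- boundary control points: the G³ left-endpoint formulas ...
    (hr0 : ∀ lam1 lam2 lam3 mu1 mu2 mu3 : ℝ, rf lam1 lam2 lam3 mu1 mu2 mu3 0 = p 0)
    (hr1 : ∀ lam1 lam2 lam3 mu1 mu2 mu3 : ℝ,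
      rf lam1 lam2 lam3 mu1 mu2 mu3 1 = p 0 + ((n : ℝ) / (m : ℝ) * lam1) • fdiff p 1 0)
    (hr2 : ∀ lam1 lam2 lam3 mu1 mu2 mu3 : ℝ,
      rf lam1 lam2 lam3 mu1 mu2 mu3 2 = p 0 +
        ((n : ℝ) / (m : ℝ) * (2 * lam1 + lam2 / ((m : ℝ) - 1))) • fdiff p 1 0 +
        (poch ((n : ℝ) - 1) 2 / poch ((m : ℝ) - 1) 2 * lam1 ^ 2) • fdiff p 2 0)
    (hr3 : ∀ lam1 lam2 lam3 mu1 mu2 mu3 : ℝ,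
      rf lam1 lam2 lam3 mu1 mu2 mu3 3 = p 0 +
        ((n : ℝ) / (m : ℝ) *
          (3 * lam1 + 3 * lam2 / ((m : ℝ) - 1) + lam3 / poch ((m : ℝ) - 2) 2)) • fdiff p 1 0 +
        (3 * (poch ((n : ℝ) - 1) 2 / poch ((m : ℝ) - 1) 2) *
          (lam1 ^ 2 + lam1 * lam2 / ((m : ℝ) - 2))) • fdiff p 2 0 +
        (poch ((n : ℝ) - 2) 3 / poch ((m : ℝ) - 2) 3 * lam1 ^ 3) • fdiff p 3 0)
    -- ... and the analogous G³ right-endpoint formulas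
    (hrm3 : ∀ lam1 lam2 lam3 mu1 mu2 mu3 : ℝ,
      rf lam1 lam2 lam3 mu1 mu2 mu3 (m - 3) = p n -
        ((n : ℝ) / (m : ℝ) *
          (3 * mu1 - 3 * mu2 / ((m : ℝ) - 1) + mu3 / poch ((m : ℝ) - 2) 2)) • fdiff p 1 (n - 1) +
        (3 * (poch ((n : ℝ) - 1) 2 / poch ((m : ℝ) - 1) 2) *
          (mu1 ^ 2 - mu1 * mu2 / ((m : ℝ) - 2))) • fdiff p 2 (n - 2) -
        (poch ((n : ℝ) - 2) 3 / poch ((m : ℝ) - 2) 3 * mu1 ^ 3) • fdiff p 3 (n - 3))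
    (hrm2 : ∀ lam1 lam2 lam3 mu1 mu2 mu3 : ℝ,
      rf lam1 lam2 lam3 mu1 mu2 mu3 (m - 2) = p n -
        ((n : ℝ) / (m : ℝ) * (2 * mu1 - mu2 / ((m : ℝ) - 1))) • fdiff p 1 (n - 1) +
        (poch ((n : ℝ) - 1) 2 / poch ((m : ℝ) - 1) 2 * mu1 ^ 2) • fdiff p 2 (n - 2))
    (hrm1 : ∀ lam1 lam2 lam3 mu1 mu2 mu3 : ℝ,
      rf lam1 lam2 lam3 mu1 mu2 mu3 (m - 1) = p n -
        ((n : ℝ) / (m : ℝ) * mu1) • fdiff p 1 (n - 1))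
    (hrm : ∀ lam1 lam2 lam3 mu1 mu2 mu3 : ℝ, rf lam1 lam2 lam3 mu1 mu2 mu3 m = p n)
    -- inner control points: the unique minimizers for the fixed boundary points,
    -- given via the constrained dual Bernstein basis
    (hrin : ∀ (lam1 lam2 lam3 mu1 mu2 mu3 : ℝ) (i : ℕ), 4 ≤ i → i ≤ m - 4 →
      rf lam1 lam2 lam3 mu1 mu2 mu3 i = ∑ j ∈ Finset.range (n + 1),
        jacobiInner α β (bernsteinPolynomial ℝ n j) (D i) •
          (p j - ((n.choose j : ℝ))⁻¹ •
            ∑ h ∈ (Finset.range (m + 1)).filter (fun h : ℕ => h ≤ 3 ∨ m - 3 ≤ h),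
              (chZ (n - m) ((j : ℤ) - (h : ℤ)) * (m.choose h : ℝ)) •
                rf lam1 lam2 lam3 mu1 mu2 mu3 h)) :
    -- the error `E(λ₁, λ₂, λ₃, μ₁, μ₂, μ₃)` is a polynomial function of total degree at most 6
    ∃ F : MvPolynomial (Fin 6) ℝ, F.totalDegree ≤ 6 ∧
      ∀ lam1 lam2 lam3 mu1 mu2 mu3 : ℝ,
        (∫ t in (0:ℝ)..1, (1 - t) ^ α * t ^ β *
            ‖(∑ i ∈ Finset.range (n + 1), bern n i t • p i) -
              (∑ i ∈ Finset.range (m + 1),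
                bern m i t • rf lam1 lam2 lam3 mu1 mu2 mu3 i)‖ ^ 2) =
          MvPolynomial.eval ![lam1, lam2, lam3, mu1, mu2, mu3] F := by
  set r : ℕ → (Fin 6 → ℝ) → EuclideanSpace ℝ (Fin d) :=
    fun i x => rf (x 0) (x 1) (x 2) (x 3) (x 4) (x 5) i
  have hboundary : ∀ h ∈ (Finset.range (m + 1)).filter (fun h : ℕ => h ≤ 3 ∨ m - 3 ≤ h),
      r h ∈ polynomialMaps (Fin 6) (EuclideanSpace ℝ (Fin d)) 3 := by
    intro h hh
    simp only [Finset.mem_filter, Finset.mem_range] at hh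
    obtain rfl | rfl | rfl | rfl | rfl | rfl | rfl | rfl :
        h = 0 ∨ h = 1 ∨ h = 2 ∨ h = 3 ∨ h = m - 3 ∨ h = m - 2 ∨ h = m - 1 ∨ h = m := by omega
    all_goals
      simp only [r, hr0, hr1, hr2, hr3, hrm3, hrm2, hrm1, hrm]
      apply_rules [fun_sub_mem, fun_add_mem, smul_const_mem_polynomialMaps,
        const_mem_polynomialMaps, fun_const_mul_mem, fun_div_const_mem, coord_mem_polynomialMaps,
        coord_mul_coord_mem_polynomialMaps, coord_pow_mem_polynomialMaps]
      all_goals norm_num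
  have hcontrol : ∀ i ∈ Finset.range (m + 1),
      r i ∈ polynomialMaps (Fin 6) (EuclideanSpace ℝ (Fin d)) 3 := by
    intro i hi
    by_cases hi' : i ≤ 3 ∨ m - 3 ≤ i
    · exact hboundary i (Finset.mem_filter.2 ⟨hi, hi'⟩)
    · simp only [r, hrin _ _ _ _ _ _ i (by omega) (by omega)]
      exact fun_sum_mem _ fun j _ => fun_const_smul_mem _ <| fun_sub_mem
        (const_mem_polynomialMaps _ _) <| fun_const_smul_mem _ <| fun_sum_mem _ fun h hh =>
          fun_const_smul_mem _ (hboundary h hh)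
  obtain ⟨F, hF, hFx⟩ := exists_eval_eq_weighted_sq_error
    (P := fun t => ∑ i ∈ Finset.range (n + 1), bern n i t • p i)
    (intervalIntegrable_one_sub_rpow_mul_rpow hα hβ) (by fun_prop) _ (continuous_bern m) hcontrol
  exact ⟨F, hF, fun l₁ l₂ l₃ u₁ u₂ u₃ => hFx ![l₁, l₂, l₃, u₁, u₂, u₃]⟩

theorem stmt17 (α β : ℝ) (hα : -1 < α) (hβ : -1 < β) (d n m : ℕ)
    (hm : 6 < m) (hmn : m < n) (hn : 3 ≤ n)
    (p : ℕ → EuclideanSpace ℝ (Fin d))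
    -- the constrained dual Bernstein basis of `Π_m^{(3,3)}`
    (D : ℕ → Polynomial ℝ)
    (hDmem : ∀ i : ℕ, 4 ≤ i → i ≤ m - 4 → D i ∈ PiSpace m 3 3)
    (hdual : ∀ i j : ℕ, 4 ≤ i → i ≤ m - 4 → 4 ≤ j → j ≤ m - 4 →
      jacobiInner α β (D i) (bernsteinPolynomial ℝ m j) = if i = j then 1 else 0)
    -- the control points, as functions of the parameters λ₁, λ₂, λ₃, μ₁, μ₂, μ₃:
    (rf : ℝ → ℝ → ℝ → ℝ → ℝ → ℝ → ℕ → EuclideanSpace ℝ (Fin d))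
    -- boundary control points: the G³ left-endpoint formulas ...
    (hr0 : ∀ lam1 lam2 lam3 mu1 mu2 mu3 : ℝ, rf lam1 lam2 lam3 mu1 mu2 mu3 0 = p 0)
    (hr1 : ∀ lam1 lam2 lam3 mu1 mu2 mu3 : ℝ,
      rf lam1 lam2 lam3 mu1 mu2 mu3 1 = p 0 + ((n : ℝ) / (m : ℝ) * lam1) • fdiff p 1 0)
    (hr2 : ∀ lam1 lam2 lam3 mu1 mu2 mu3 : ℝ,
      rf lam1 lam2 lam3 mu1 mu2 mu3 2 = p 0 +
        ((n : ℝ) / (m : ℝ) * (2 * lam1 + lam2 / ((m : ℝ) - 1))) • fdiff p 1 0 +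
        (poch ((n : ℝ) - 1) 2 / poch ((m : ℝ) - 1) 2 * lam1 ^ 2) • fdiff p 2 0)
    (hr3 : ∀ lam1 lam2 lam3 mu1 mu2 mu3 : ℝ,
      rf lam1 lam2 lam3 mu1 mu2 mu3 3 = p 0 +
        ((n : ℝ) / (m : ℝ) *
          (3 * lam1 + 3 * lam2 / ((m : ℝ) - 1) + lam3 / poch ((m : ℝ) - 2) 2)) • fdiff p 1 0 +
        (3 * (poch ((n : ℝ) - 1) 2 / poch ((m : ℝ) - 1) 2) *
          (lam1 ^ 2 + lam1 * lam2 / ((m : ℝ) - 2))) • fdiff p 2 0 +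
        (poch ((n : ℝ) - 2) 3 / poch ((m : ℝ) - 2) 3 * lam1 ^ 3) • fdiff p 3 0)
    -- ... and the analogous G³ right-endpoint formulas
    (hrm3 : ∀ lam1 lam2 lam3 mu1 mu2 mu3 : ℝ,
      rf lam1 lam2 lam3 mu1 mu2 mu3 (m - 3) = p n -
        ((n : ℝ) / (m : ℝ) *
          (3 * mu1 - 3 * mu2 / ((m : ℝ) - 1) + mu3 / poch ((m : ℝ) - 2) 2)) • fdiff p 1 (n - 1) +
        (3 * (poch ((n : ℝ) - 1) 2 / poch ((m : ℝ) - 1) 2) *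
          (mu1 ^ 2 - mu1 * mu2 / ((m : ℝ) - 2))) • fdiff p 2 (n - 2) -
        (poch ((n : ℝ) - 2) 3 / poch ((m : ℝ) - 2) 3 * mu1 ^ 3) • fdiff p 3 (n - 3))
    (hrm2 : ∀ lam1 lam2 lam3 mu1 mu2 mu3 : ℝ,
      rf lam1 lam2 lam3 mu1 mu2 mu3 (m - 2) = p n -
        ((n : ℝ) / (m : ℝ) * (2 * mu1 - mu2 / ((m : ℝ) - 1))) • fdiff p 1 (n - 1) +
        (poch ((n : ℝ) - 1) 2 / poch ((m : ℝ) - 1) 2 * mu1 ^ 2) • fdiff p 2 (n - 2))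
    (hrm1 : ∀ lam1 lam2 lam3 mu1 mu2 mu3 : ℝ,
      rf lam1 lam2 lam3 mu1 mu2 mu3 (m - 1) = p n -
        ((n : ℝ) / (m : ℝ) * mu1) • fdiff p 1 (n - 1))
    (hrm : ∀ lam1 lam2 lam3 mu1 mu2 mu3 : ℝ, rf lam1 lam2 lam3 mu1 mu2 mu3 m = p n)
    -- inner control points: the unique minimizers for the fixed boundary points,
    -- given via the constrained dual Bernstein basis
    (hrin : ∀ (lam1 lam2 lam3 mu1 mu2 mu3 : ℝ) (i : ℕ), 4 ≤ i → i ≤ m - 4 →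
      rf lam1 lam2 lam3 mu1 mu2 mu3 i = ∑ j ∈ Finset.range (n + 1),
        jacobiInner α β (bernsteinPolynomial ℝ n j) (D i) •
          (p j - ((n.choose j : ℝ))⁻¹ •
            ∑ h ∈ (Finset.range (m + 1)).filter (fun h : ℕ => h ≤ 3 ∨ m - 3 ≤ h),
              (chZ (n - m) ((j : ℤ) - (h : ℤ)) * (m.choose h : ℝ)) •
                rf lam1 lam2 lam3 mu1 mu2 mu3 h)) :
    -- the error `E(λ₁, λ₂, λ₃, μ₁, μ₂, μ₃)` is a polynomial function of total degree at most 6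
    ∃ F : MvPolynomial (Fin 6) ℝ, F.totalDegree ≤ 6 ∧
      ∀ lam1 lam2 lam3 mu1 mu2 mu3 : ℝ,
        (∫ t in (0:ℝ)..1, (1 - t) ^ α * t ^ β *
            ‖(∑ i ∈ Finset.range (n + 1), bern n i t • p i) -
              (∑ i ∈ Finset.range (m + 1),
                bern m i t • rf lam1 lam2 lam3 mu1 mu2 mu3 i)‖ ^ 2) =
          MvPolynomial.eval ![lam1, lam2, lam3, mu1, mu2, mu3] F :=
  stmt17_general α β hα hβ d n m p D rf hr0 hr1 hr2 hr3 hrm3 hrm2 hrm1 hrm hrin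
end
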